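/- For every xs : List ℤ, perm xs >>= filt (fun zs => (scanlp oplus (0, [], []) zs).all okB) = protect (put (0, [], []) >>= fun _ => queensBody xs). That is, the generate-and-test specification of the n-queens problem (nondeterministically generate a permutation, then keep it only if every intermediate state of the diagonal scan satisfies okB) equals the backtracking program queensBody that threads the diagonal information through the monadic state and prunes unsafe choices as it goes, run from the initial state (0, [], []) with the state protected. -/
import Mathlib


/-- `guard` built from a failure operation `mzero`. -/
def mguard {m : Type → Type} [Monad m] (mzero : {α : Type} → m α) (b : Bool) : m PUnit :=
  if b then pure PUnit.unit else mzero

/-- Monadic filtering by a Boolean predicate. -/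
def filt {m : Type → Type} [Monad m] (mzero : {α : Type} → m α) {α : Type}
    (p : α → Bool) (x : α) : m α :=
  mguard (m := m) @mzero (p x) >>= fun _ => pure x

/-- The prefix scan: `foldl` applied to every non-empty prefix. -/
def scanlp {σ α : Type} (op : σ → α → σ) : σ → List α → List σ
  | _, [] => []
  | st, x :: xs => op st x :: scanlp op (op st x) xs

/-- Backup the state, run a computation, restore the state. -/
def protect {m : Type → Type} [Monad m] {σ β : Type}
    (get : m σ) (put : σ → m PUnit) (n : m β) : m β :=
  get >>= fun ini => n >>= fun x => put ini >>= fun _ => pure x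

/-- The step function of the `n`-queens scan: advance the column index and
record the up- and down-diagonals of the newly placed queen. -/
def oplus : (ℤ × List ℤ × List ℤ) → ℤ → ℤ × List ℤ × List ℤ
  | (i, us, ds), x => (i + 1, (i + x) :: us, (i - x) :: ds)

/-- The safety check on a state: the most recently recorded up- and
down-diagonals clash with none of the previously recorded ones. -/
def okB : ℤ × List ℤ × List ℤ → Bool
  | (_, u :: us, d :: ds) => (!us.contains u) && (!ds.contains d)
  | _ => true

/-- Nondeterministically pick one element of a list, returning it together
with the remaining elements (in order), and a proof on lengths. -/
def select {m : Type → Type} [Monad m]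
    (mzero : {α : Type} → m α) (mplus : {α : Type} → m α → m α → m α) :
    (xs : List ℤ) → m {p : ℤ × List ℤ // p.2.length + 1 = xs.length}
  | [] => mzero
  | x :: xs =>
      mplus (pure ⟨(x, xs), rfl⟩)
        (select @mzero @mplus xs >>= fun q =>
          match q with
          | ⟨(y, ys), h⟩ => pure ⟨(y, x :: ys), congrArg Nat.succ h⟩)

/-- Nondeterministically compute a permutation of a list. -/
def perm {m : Type → Type} [Monad m]
    (mzero : {α : Type} → m α) (mplus : {α : Type} → m α → m α → m α) :
    List ℤ → m (List ℤ)
  | [] => pure []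
  | x :: xs =>
      select @mzero @mplus (x :: xs) >>= fun q =>
        match q with
        | ⟨(y, ys), _h⟩ =>
            perm @mzero @mplus ys >>= fun zs => pure (y :: zs)
  termination_by xs => xs.length
  decreasing_by simp_all

/-- The backtracking `n`-queens program: thread the diagonal information
through the state and prune unsafe choices as they are made. -/
def queensBody {m : Type → Type} [Monad m]
    (mzero : {α : Type} → m α) (mplus : {α : Type} → m α → m α → m α)
    (get : m (ℤ × List ℤ × List ℤ)) (put : (ℤ × List ℤ × List ℤ) → m PUnit) :
    List ℤ → m (List ℤ)
  | [] => pure []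
  | x :: xs =>
      select @mzero @mplus (x :: xs) >>= fun q =>
        match q with
        | ⟨(y, ys), _h⟩ =>
            get >>= fun st => mguard (m := m) @mzero (okB (oplus st y)) >>= fun _ =>
              put (oplus st y) >>= fun _ =>
                (queensBody @mzero @mplus get put ys >>= fun zs => pure (y :: zs))
  termination_by xs => xs.length
  decreasing_by simp_all

section QueensAux

variable {m : Type → Type} [Monad m] [LawfulMonad m]

lemma select_comm (mzero : {α : Type} → m α) (mplus : {α : Type} → m α → m α → m α)
    (left_distr : ∀ {α β : Type} (a b : m α) (f : α → m β),
      mplus a b >>= f = mplus (a >>= f) (b >>= f))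
    (left_zero : ∀ {α β : Type} (f : α → m β), (mzero : m α) >>= f = mzero)
    (right_distr : ∀ {α β : Type} (n : m α) (f₁ f₂ : α → m β),
      (n >>= fun x => mplus (f₁ x) (f₂ x)) = mplus (n >>= f₁) (n >>= f₂))
    (right_zero : ∀ {α β : Type} (n : m α), (n >>= fun _ => (mzero : m β)) = mzero) :
    ∀ (xs : List ℤ) {β γ : Type} (p : m β)
      (k : β → {q : ℤ × List ℤ // q.2.length + 1 = xs.length} → m γ),
      (p >>= fun b => select @mzero @mplus xs >>= fun a => k b a)
        = select @mzero @mplus xs >>= fun a => p >>= fun b => k b a := by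
  intro xs
  induction xs with
  | nil =>
      intro β γ p k
      simp only [select, left_zero, right_zero]
  | cons x xs ih =>
      intro β γ p k
      simp only [select, left_distr, bind_assoc, pure_bind]
      rw [right_distr]
      rw [ih]

lemma perm_comm (mzero : {α : Type} → m α) (mplus : {α : Type} → m α → m α → m α)
    (left_distr : ∀ {α β : Type} (a b : m α) (f : α → m β),
      mplus a b >>= f = mplus (a >>= f) (b >>= f))
    (left_zero : ∀ {α β : Type} (f : α → m β), (mzero : m α) >>= f = mzero)
    (right_distr : ∀ {α β : Type} (n : m α) (f₁ f₂ : α → m β),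
      (n >>= fun x => mplus (f₁ x) (f₂ x)) = mplus (n >>= f₁) (n >>= f₂))
    (right_zero : ∀ {α β : Type} (n : m α), (n >>= fun _ => (mzero : m β)) = mzero) :
    ∀ (n : ℕ) (xs : List ℤ), xs.length ≤ n → ∀ {β γ : Type} (p : m β)
      (k : β → List ℤ → m γ),
      (p >>= fun b => perm @mzero @mplus xs >>= fun a => k b a)
        = perm @mzero @mplus xs >>= fun a => p >>= fun b => k b a := by
  intro n
  induction n with
  | zero =>
      intro xs hxs β γ p k
      have : xs = [] := List.length_eq_zero_iff.mp (Nat.le_zero.mp hxs)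
      subst this
      simp [perm]
  | succ n ih =>
      intro xs hxs β γ p k
      match xs with
      | [] => simp [perm]
      | x :: xs =>
          rw [perm]
          simp only [bind_assoc]
          rw [select_comm @mzero @mplus @left_distr @left_zero @right_distr @right_zero]
          apply bind_congr
          rintro ⟨⟨y, ys⟩, h⟩
          simp only [List.length_cons] at h hxs
          simp only [bind_assoc, pure_bind]
          rw [ih ys (by omega)]

lemma mguard_bind_mguard (mzero : {α : Type} → m α)
    (left_zero : ∀ {α β : Type} (f : α → m β), (mzero : m α) >>= f = mzero)
    (right_zero : ∀ {α β : Type} (n : m α), (n >>= fun _ => (mzero : m β)) = mzero)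
    {α γ : Type} (a : Bool) (n : m α) (b : α → Bool) (k : α → PUnit → m γ) :
    (mguard (m := m) @mzero a >>= fun _ => n >>= fun z => mguard (m := m) @mzero (b z) >>= k z)
      = n >>= fun z => mguard (m := m) @mzero (a && b z) >>= k z := by
  cases a
  · simp [mguard, left_zero, right_zero]
  · simp [mguard]

lemma put_mguard_put (mzero : {α : Type} → m α)
    (left_zero : ∀ {α β : Type} (f : α → m β), (mzero : m α) >>= f = mzero)
    (right_zero : ∀ {α β : Type} (n : m α), (n >>= fun _ => (mzero : m β)) = mzero)
    (put : (ℤ × List ℤ × List ℤ) → m PUnit)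
    (put_put : ∀ st st', (put st >>= fun _ => put st') = put st')
    {γ : Type} (st st' : ℤ × List ℤ × List ℤ) (b : Bool) (k : PUnit → m γ) :
    (put st >>= fun _ => mguard (m := m) @mzero b >>= fun _ => put st' >>= k)
      = mguard (m := m) @mzero b >>= fun _ => put st' >>= k := by
  cases b
  · simp [mguard, left_zero, right_zero]
  · simp only [mguard, if_pos, pure_bind, ← bind_assoc, put_put]

lemma put_queensBody (mzero : {α : Type} → m α) (mplus : {α : Type} → m α → m α → m α)
    (left_distr : ∀ {α β : Type} (a b : m α) (f : α → m β),
      mplus a b >>= f = mplus (a >>= f) (b >>= f))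
    (left_zero : ∀ {α β : Type} (f : α → m β), (mzero : m α) >>= f = mzero)
    (right_distr : ∀ {α β : Type} (n : m α) (f₁ f₂ : α → m β),
      (n >>= fun x => mplus (f₁ x) (f₂ x)) = mplus (n >>= f₁) (n >>= f₂))
    (right_zero : ∀ {α β : Type} (n : m α), (n >>= fun _ => (mzero : m β)) = mzero)
    (get : m (ℤ × List ℤ × List ℤ)) (put : (ℤ × List ℤ × List ℤ) → m PUnit)
    (put_put : ∀ st st', (put st >>= fun _ => put st') = put st')
    (put_get : ∀ st, (put st >>= fun _ => get) = put st >>= fun _ => pure st) :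
    ∀ (n : ℕ) (xs : List ℤ), xs.length ≤ n → ∀ (st : ℤ × List ℤ × List ℤ),
      (put st >>= fun _ => queensBody @mzero @mplus get put xs)
        = perm @mzero @mplus xs >>= fun ys =>
            mguard (m := m) @mzero ((scanlp oplus st ys).all okB) >>= fun _ =>
              put (ys.foldl oplus st) >>= fun _ => pure ys := by
  intro n
  induction n with
  | zero =>
      intro xs hxs st
      have : xs = [] := List.length_eq_zero_iff.mp (Nat.le_zero.mp hxs)
      subst this
      simp [perm, queensBody, scanlp, mguard]
  | succ n ih =>
      intro xs hxs st
      match xs with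
      | [] => simp [perm, queensBody, scanlp, mguard]
      | x :: xs =>
          rw [queensBody, perm]
          simp only [bind_assoc]
          rw [select_comm @mzero @mplus @left_distr @left_zero @right_distr @right_zero]
          apply bind_congr
          rintro ⟨⟨y, ys⟩, h⟩
          simp only [List.length_cons] at h hxs
          simp only [bind_assoc, pure_bind]
          -- put st ; get  ~>  put st ; pure st
          rw [← bind_assoc, put_get, bind_assoc, pure_bind]
          rw [put_mguard_put @mzero @left_zero @right_zero put put_put]
          rw [show (put (oplus st y) >>= fun _ =>
                queensBody @mzero @mplus get put ys >>= fun zs => pure (y :: zs))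
              = (put (oplus st y) >>= fun _ =>
                  queensBody @mzero @mplus get put ys) >>= fun zs => pure (y :: zs)
            from (bind_assoc _ _ _).symm]
          rw [ih ys (by omega)]
          simp only [bind_assoc, pure_bind, scanlp, List.all_cons, List.foldl_cons]
          rw [mguard_bind_mguard @mzero @left_zero @right_zero]

end QueensAux

theorem queens_derivation {m : Type → Type} [Monad m] [LawfulMonad m]
    (mzero : {α : Type} → m α) (mplus : {α : Type} → m α → m α → m α)
    (mplus_assoc : ∀ {α : Type} (a b c : m α), mplus (mplus a b) c = mplus a (mplus b c))
    (mzero_left : ∀ {α : Type} (a : m α), mplus mzero a = a)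
    (mzero_right : ∀ {α : Type} (a : m α), mplus a mzero = a)
    (left_distr : ∀ {α β : Type} (a b : m α) (f : α → m β),
      mplus a b >>= f = mplus (a >>= f) (b >>= f))
    (left_zero : ∀ {α β : Type} (f : α → m β), (mzero : m α) >>= f = mzero)
    (right_distr : ∀ {α β : Type} (n : m α) (f₁ f₂ : α → m β),
      (n >>= fun x => mplus (f₁ x) (f₂ x)) = mplus (n >>= f₁) (n >>= f₂))
    (right_zero : ∀ {α β : Type} (n : m α), (n >>= fun _ => (mzero : m β)) = mzero)
    (get : m (ℤ × List ℤ × List ℤ)) (put : (ℤ × List ℤ × List ℤ) → m PUnit)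
    (put_put : ∀ st st', (put st >>= fun _ => put st') = put st')
    (put_get : ∀ st, (put st >>= fun _ => get) = put st >>= fun _ => pure st)
    (get_put : get >>= put = pure PUnit.unit)
    (get_get : ∀ {β : Type} (k : (ℤ × List ℤ × List ℤ) → (ℤ × List ℤ × List ℤ) → m β),
      (get >>= fun st => get >>= k st) = get >>= fun st => k st st) :
    ∀ xs : List ℤ,
      (perm @mzero @mplus xs >>=
          filt (m := m) @mzero (fun zs => (scanlp oplus (0, [], []) zs).all okB))
        = protect get put
            (put (0, [], []) >>= fun _ => queensBody @mzero @mplus get put xs) := by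
  intro xs
  simp only [protect]
  rw [put_queensBody @mzero @mplus @left_distr @left_zero @right_distr @right_zero get put
      put_put put_get xs.length xs le_rfl (0, [], [])]
  simp only [bind_assoc, pure_bind]
  rw [perm_comm @mzero @mplus @left_distr @left_zero @right_distr @right_zero xs.length xs
      le_rfl]
  apply bind_congr
  intro ys
  simp only [filt]
  cases hc : (scanlp oplus (0, [], []) ys).all okB
  · simp [mguard, left_zero, right_zero]
  · simp only [mguard, if_pos, pure_bind]
    have h1 : ∀ ini, (put (ys.foldl oplus (0, [], [])) >>= fun _ =>
        put ini >>= fun _ => pure ys) = put ini >>= fun _ => pure ys := by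
      intro ini
      rw [← bind_assoc, put_put]
    simp only [h1]
    rw [← bind_assoc, get_put, pure_bind]
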